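/- Adams consensus satisfies the binary converse of unanimity: if φ_Ad(P) is a binary (fully resolved) tree T, then every tree in the profile P equals T. -/

import Mathlib

/-- A (candidate) rooted phylogenetic tree, encoded by its set of clusters. -/
abbrev PTree : Type := Finset (Finset ℕ)

/-- Two clusters are nested: disjoint or one contained in the other. -/
abbrev Nested (C D : Finset ℕ) : Prop := C ∩ D = ∅ ∨ C ⊆ D ∨ D ⊆ C

/-- `H` is a hierarchy on leaf set `X`: a rooted phylogenetic tree in `RP(X)`. -/
structure IsHierarchy (X : Finset ℕ) (H : PTree) : Prop where
  subset_top : ∀ C ∈ H, C ⊆ X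
  cluster_nonempty : ∀ C ∈ H, C.Nonempty
  top_mem : X ∈ H
  singleton_mem : ∀ x ∈ X, ({x} : Finset ℕ) ∈ H
  laminar : ∀ C ∈ H, ∀ D ∈ H, Nested C D

/-- Restriction `T|_Y` of a tree to a subset `Y` of the leaves. -/
def restrictT (H : PTree) (Y : Finset ℕ) : PTree :=
  (H.image (fun C => C ∩ Y)).filter (fun C => C.Nonempty)

/-- The maximal proper clusters of a tree on leaf set `X`. -/
def maxProper (X : Finset ℕ) (T : PTree) : PTree :=
  T.filter (fun C => C ≠ X ∧ ∀ D ∈ T, C ⊂ D → D = X)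

/-- Common refinement of two collections of blocks. -/
def meet2 (π π' : Finset (Finset ℕ)) : Finset (Finset ℕ) :=
  ((π ×ˢ π').image (fun p => p.1 ∩ p.2)).filter (fun B => B.Nonempty)

/-- Common refinement of a list of collections of blocks. -/
def meetAll : List (Finset (Finset ℕ)) → Finset (Finset ℕ)
  | [] => ∅
  | π :: L => L.foldl meet2 π

/-- Adams consensus, with fuel: the maximal proper clusters of the output are
the nonempty intersections of one maximal proper cluster from each input tree
(the common refinement of the top partitions), and the construction recurses on
each such block with the restricted profile. -/
def adamsAux : ℕ → Finset ℕ → List PTree → PTree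
  | 0, X, _ => {X}
  | n + 1, X, P =>
      let B := (meetAll (P.map (maxProper X))).filter (fun A => A ⊂ X)
      insert X (B.biUnion (fun A => adamsAux n A (P.map (fun T => restrictT T A))))

/-- Adams consensus of a profile of trees on leaf set `X`. -/
def adams (X : Finset ℕ) (P : List PTree) : PTree := adamsAux X.card X P

/-- `T` is a binary (fully resolved) tree on `X`. -/
def IsBinary (X : Finset ℕ) (T : PTree) : Prop := T.card = 2 * X.card - 1

-- ===== helpers (already checked) =====
def PD (π : Finset (Finset ℕ)) : Prop := ∀ A ∈ π, ∀ B ∈ π, A ≠ B → A ∩ B = ∅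

lemma mem_restrictT {H : PTree} {Y C : Finset ℕ} :
    C ∈ restrictT H Y ↔ (∃ D ∈ H, D ∩ Y = C) ∧ C.Nonempty := by
  simp [restrictT]

lemma restrict_hierarchy {X Y : Finset ℕ} {T : PTree} (hT : IsHierarchy X T)
    (hYX : Y ⊆ X) (hY : Y.Nonempty) : IsHierarchy Y (restrictT T Y) := by
  constructor
  · intro C hC; obtain ⟨⟨D, _, rfl⟩, _⟩ := mem_restrictT.1 hC
    exact Finset.inter_subset_right
  · intro C hC; exact (mem_restrictT.1 hC).2
  · exact mem_restrictT.2 ⟨⟨X, hT.top_mem, by rw [Finset.inter_eq_right.2 hYX]⟩, hY⟩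
  · intro x hx
    exact mem_restrictT.2 ⟨⟨{x}, hT.singleton_mem x (hYX hx), by
      simp [Finset.inter_eq_left.2 (Finset.singleton_subset_iff.2 hx)]⟩, Finset.singleton_nonempty x⟩
  · intro C hC D hD
    obtain ⟨⟨C', hC', rfl⟩, _⟩ := mem_restrictT.1 hC
    obtain ⟨⟨D', hD', rfl⟩, _⟩ := mem_restrictT.1 hD
    rcases hT.laminar C' hC' D' hD' with h | h | h
    · left
      have hsub : C' ∩ Y ∩ (D' ∩ Y) ⊆ C' ∩ D' := by
        intro x hx
        simp only [Finset.mem_inter] at hx ⊢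
        exact ⟨hx.1.1, hx.2.1⟩
      rw [h] at hsub; exact Finset.subset_empty.1 hsub
    · right; left; exact Finset.inter_subset_inter h le_rfl
    · right; right; exact Finset.inter_subset_inter h le_rfl

lemma mem_maxProper {X C : Finset ℕ} {T : PTree} :
    C ∈ maxProper X T ↔ C ∈ T ∧ C ≠ X ∧ ∀ D ∈ T, C ⊂ D → D = X := by
  simp [maxProper, and_assoc]

lemma maxProper_ssubset {X C : Finset ℕ} {T : PTree} (hT : IsHierarchy X T)
    (hC : C ∈ maxProper X T) : C ⊂ X := by
  obtain ⟨h1, h2, _⟩ := mem_maxProper.1 hC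
  exact lt_of_le_of_ne (hT.subset_top C h1) h2

lemma maxProper_pd {X : Finset ℕ} {T : PTree} (hT : IsHierarchy X T) :
    PD (maxProper X T) := by
  intro A hA B hB hne
  obtain ⟨hA1, hA2, hA3⟩ := mem_maxProper.1 hA
  obtain ⟨hB1, hB2, hB3⟩ := mem_maxProper.1 hB
  rcases hT.laminar A hA1 B hB1 with h | h | h
  · exact h
  · exact absurd (hA3 B hB1 (lt_of_le_of_ne h hne)) hB2
  · exact absurd (hB3 A hA1 (lt_of_le_of_ne h (Ne.symm hne))) hA2

lemma exists_maxProper {X C : Finset ℕ} {T : PTree} (hT : IsHierarchy X T)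
    (hC : C ∈ T) (hne : C ≠ X) : ∃ D ∈ maxProper X T, C ⊆ D := by
  have hS : (T.filter (fun D => C ⊆ D ∧ D ≠ X)).Nonempty :=
    ⟨C, Finset.mem_filter.2 ⟨hC, le_rfl, hne⟩⟩
  obtain ⟨D, hD, hmax⟩ := Finset.exists_max_image _ Finset.card hS
  obtain ⟨hD1, hD2, hD3⟩ := Finset.mem_filter.1 hD
  refine ⟨D, mem_maxProper.2 ⟨hD1, hD3, fun E hE hDE => ?_⟩, hD2⟩
  by_contra hEX
  have hE' : E ∈ T.filter (fun D => C ⊆ D ∧ D ≠ X) :=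
    Finset.mem_filter.2 ⟨hE, le_trans hD2 (subset_of_ssubset hDE), hEX⟩
  exact absurd (hmax E hE') (not_le.2 (Finset.card_lt_card hDE))

lemma mem_meet2 {π π' : Finset (Finset ℕ)} {A : Finset ℕ} :
    A ∈ meet2 π π' ↔ (∃ C ∈ π, ∃ C' ∈ π', C ∩ C' = A) ∧ A.Nonempty := by
  simp only [meet2, Finset.mem_filter, Finset.mem_image, Finset.mem_product, Prod.exists]
  tauto

lemma foldl_subset_head {L : List (Finset (Finset ℕ))} :
    ∀ {π A}, A ∈ L.foldl meet2 π → ∃ C ∈ π, A ⊆ C := by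
  induction L with
  | nil => intro π A h; exact ⟨A, h, le_rfl⟩
  | cons π' L ih =>
    intro π A h
    obtain ⟨E, hE, hAE⟩ := ih h
    obtain ⟨⟨C, hC, C', hC', rfl⟩, _⟩ := mem_meet2.1 hE
    exact ⟨C, hC, le_trans hAE Finset.inter_subset_left⟩

lemma foldl_subset_tail {L : List (Finset (Finset ℕ))} :
    ∀ {π A}, A ∈ L.foldl meet2 π → ∀ π' ∈ L, ∃ C ∈ π', A ⊆ C := by
  induction L with
  | nil => intro π A _ π' h; simp at h
  | cons π'' L ih =>
    intro π A h π' hπ'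
    rcases List.mem_cons.1 hπ' with rfl | hπ'
    · have h' : A ∈ List.foldl meet2 (meet2 π π') L := h
      obtain ⟨E, hE, hAE⟩ := foldl_subset_head h'
      obtain ⟨⟨C, hC, C', hC', rfl⟩, _⟩ := mem_meet2.1 hE
      exact ⟨C', hC', le_trans hAE Finset.inter_subset_right⟩
    · exact ih h π' hπ'

lemma foldl_nonempty {L : List (Finset (Finset ℕ))} :
    ∀ {π A}, (∀ B ∈ π, B.Nonempty) → A ∈ L.foldl meet2 π → A.Nonempty := by
  induction L with
  | nil => intro π A h hA; exact h A hA
  | cons π' L ih =>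
    intro π A h hA
    exact ih (fun B hB => (mem_meet2.1 hB).2) hA

lemma meet2_pd {π π' : Finset (Finset ℕ)} (h : PD π) (h' : PD π') : PD (meet2 π π') := by
  intro A hA B hB hne
  obtain ⟨⟨C, hC, C', hC', rfl⟩, _⟩ := mem_meet2.1 hA
  obtain ⟨⟨D, hD, D', hD', rfl⟩, _⟩ := mem_meet2.1 hB
  by_contra hcon
  obtain ⟨x, hx⟩ := Finset.nonempty_iff_ne_empty.2 hcon
  simp only [Finset.mem_inter] at hx
  have hCD : C = D := by
    by_contra hne'
    have h0 := h C hC D hD hne'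
    have hx' : x ∈ C ∩ D := Finset.mem_inter.2 ⟨hx.1.1, hx.2.1⟩
    simp_all
  have hCD' : C' = D' := by
    by_contra hne'
    have h0 := h' C' hC' D' hD' hne'
    have hx' : x ∈ C' ∩ D' := Finset.mem_inter.2 ⟨hx.1.2, hx.2.2⟩
    simp_all
  exact hne (by rw [hCD, hCD'])

lemma foldl_pd {L : List (Finset (Finset ℕ))} :
    ∀ {π}, PD π → (∀ π' ∈ L, PD π') → PD (L.foldl meet2 π) := by
  induction L with
  | nil => intro π h _; exact h
  | cons π' L ih =>
    intro π h hL
    exact ih (meet2_pd h (hL π' (by simp))) (fun π'' h'' => hL π'' (by simp [h'']))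

lemma foldl_cover {L : List (Finset (Finset ℕ))} {x : ℕ} :
    ∀ {π}, (∃ C ∈ π, x ∈ C) → (∀ π' ∈ L, ∃ C ∈ π', x ∈ C) →
      ∃ A ∈ L.foldl meet2 π, x ∈ A := by
  induction L with
  | nil => intro π h _; exact h
  | cons π' L ih =>
    intro π h hL
    obtain ⟨C, hC, hxC⟩ := h
    obtain ⟨C', hC', hxC'⟩ := hL π' (by simp)
    refine ih ⟨C ∩ C', mem_meet2.2 ⟨⟨C, hC, C', hC', rfl⟩, ⟨x, by simp [hxC, hxC']⟩⟩,
      by simp [hxC, hxC']⟩ (fun π'' h'' => hL π'' (by simp [h'']))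

lemma restrict_eq_filter {X A : Finset ℕ} {T : PTree} (hT : IsHierarchy X T)
    (hA : A ∈ T) : restrictT T A = T.filter (fun C => C ⊆ A) := by
  ext C
  rw [mem_restrictT, Finset.mem_filter]
  constructor
  · rintro ⟨⟨D, hD, rfl⟩, hne⟩
    rcases hT.laminar D hD A hA with h | h | h
    · simp [h] at hne
    · rw [Finset.inter_eq_left.2 h]; exact ⟨hD, h⟩
    · rw [Finset.inter_eq_right.2 h]; exact ⟨hA, le_rfl⟩
  · rintro ⟨hC, hCA⟩
    exact ⟨⟨C, hC, Finset.inter_eq_left.2 hCA⟩, hT.cluster_nonempty C hC⟩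

lemma adamsAux_succ (m : ℕ) (X : Finset ℕ) (P : List PTree) :
    adamsAux (m + 1) X P =
      insert X (((meetAll (P.map (maxProper X))).filter (fun A => A ⊂ X)).biUnion
        (fun A => adamsAux m A (P.map (fun T => restrictT T A)))) := rfl

-- ===== main lemma =====
lemma main_lemma : ∀ n (X : Finset ℕ) (P : List PTree), X.Nonempty → X.card ≤ n → P ≠ [] →
    (∀ T ∈ P, IsHierarchy X T) →
    IsHierarchy X (adamsAux n X P) ∧ (adamsAux n X P).card ≤ 2 * X.card - 1 ∧
    ((adamsAux n X P).card = 2 * X.card - 1 → ∀ T ∈ P, T = adamsAux n X P) := by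
  intro n
  induction n using Nat.strong_induction_on with
  | _ n IH =>
  intro X P hXne hn hPne hH
  have hX1 : 1 ≤ X.card := hXne.card_pos
  obtain ⟨m, rfl⟩ : ∃ m, n = m + 1 := ⟨n - 1, by omega⟩
  obtain ⟨T0, Ps, rfl⟩ : ∃ T0 Ps, P = T0 :: Ps := by
    cases P with
    | nil => simp at hPne
    | cons a l => exact ⟨a, l, rfl⟩
  have hHT0 : IsHierarchy X T0 := hH T0 (by simp)
  by_cases hX2 : 2 ≤ X.card
  case neg =>
    -- X is a singleton
    have hXc : X.card = 1 := by omega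
    obtain ⟨a, rfl⟩ := Finset.card_eq_one.1 hXc
    have hmp : maxProper ({a} : Finset ℕ) T0 = ∅ := by
      apply Finset.eq_empty_iff_forall_notMem.2
      intro C hC
      obtain ⟨hC1, hC2, _⟩ := mem_maxProper.1 hC
      have h1 := hHT0.subset_top C hC1
      have h2 := hHT0.cluster_nonempty C hC1
      rcases Finset.subset_singleton_iff.1 h1 with rfl | rfl
      · simp at h2
      · exact hC2 rfl
    have hM0 : meetAll ((T0 :: Ps).map (maxProper ({a} : Finset ℕ))) = ∅ := by
      apply Finset.eq_empty_iff_forall_notMem.2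
      intro A hA
      have hA' : A ∈ (Ps.map (maxProper ({a} : Finset ℕ))).foldl meet2
          (maxProper ({a} : Finset ℕ) T0) := hA
      obtain ⟨C, hC, _⟩ := foldl_subset_head hA'
      rw [hmp] at hC
      simp at hC
    have hAD : adamsAux (m + 1) ({a} : Finset ℕ) (T0 :: Ps) = {({a} : Finset ℕ)} := by
      rw [adamsAux_succ, hM0]
      simp
    rw [hAD]
    refine ⟨?_, by simp, ?_⟩
    · constructor
      · intro C hC; rw [Finset.mem_singleton.1 hC]
      · intro C hC; rw [Finset.mem_singleton.1 hC]; exact hXne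
      · simp
      · intro x hx
        rw [Finset.mem_singleton.1 hx]; simp
      · intro C hC D hD
        rw [Finset.mem_singleton.1 hC, Finset.mem_singleton.1 hD]
        right; left; exact subset_rfl
    · intro _ T hT
      have hTh := hH T hT
      ext C
      simp only [Finset.mem_singleton]
      constructor
      · intro hC
        have h1 := hTh.subset_top C hC
        have h2 := hTh.cluster_nonempty C hC
        rcases Finset.subset_singleton_iff.1 h1 with rfl | rfl
        · simp at h2
        · rfl
      · rintro rfl; exact hTh.top_mem
  case pos =>
  -- X.card ≥ 2
  set M := meetAll ((T0 :: Ps).map (maxProper X)) with hMset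
  have hMdef : M = (Ps.map (maxProper X)).foldl meet2 (maxProper X T0) := rfl
  have fact_sub : ∀ A ∈ M, ∀ T ∈ T0 :: Ps, ∃ C ∈ maxProper X T, A ⊆ C := by
    intro A hA T hT
    rcases List.mem_cons.1 hT with rfl | hT
    · exact foldl_subset_head (hMdef ▸ hA)
    · exact foldl_subset_tail (hMdef ▸ hA) _ (List.mem_map_of_mem hT)
  have fact_ne : ∀ A ∈ M, A.Nonempty := by
    intro A hA
    exact foldl_nonempty
      (fun B hB => hHT0.cluster_nonempty B (mem_maxProper.1 hB).1) (hMdef ▸ hA)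
  have fact_ssub : ∀ A ∈ M, A ⊂ X := by
    intro A hA
    obtain ⟨C, hC, hAC⟩ := fact_sub A hA T0 (by simp)
    exact ssubset_of_subset_of_ssubset hAC (maxProper_ssubset hHT0 hC)
  have fact_pd : PD M := by
    rw [hMdef]
    apply foldl_pd (maxProper_pd hHT0)
    intro π' hπ'
    obtain ⟨T, hT, rfl⟩ := List.mem_map.1 hπ'
    exact maxProper_pd (hH T (by simp [hT]))
  have fact_cover : ∀ x ∈ X, ∃ A ∈ M, x ∈ A := by
    intro x hx
    rw [hMdef]
    have key : ∀ T, IsHierarchy X T → ∃ C ∈ maxProper X T, x ∈ C := by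
      intro T hT
      have hs : ({x} : Finset ℕ) ∈ T := hT.singleton_mem x hx
      have hne : ({x} : Finset ℕ) ≠ X := by
        intro h
        rw [← h] at hX2
        simp at hX2
      obtain ⟨D, hD, hxD⟩ := exists_maxProper hT hs hne
      exact ⟨D, hD, hxD (by simp)⟩
    refine foldl_cover (key T0 hHT0) ?_
    intro π' hπ'
    obtain ⟨T, hT, rfl⟩ := List.mem_map.1 hπ'
    exact key T (hH T (by simp [hT]))
  -- the filter in the definition is trivial
  have hB : M.filter (fun A => A ⊂ X) = M := Finset.filter_true_of_mem fact_ssub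
  set g : Finset ℕ → PTree :=
    fun A => adamsAux m A ((T0 :: Ps).map (fun T => restrictT T A)) with hg
  have hAD : adamsAux (m + 1) X (T0 :: Ps) = insert X (M.biUnion g) := by
    rw [adamsAux_succ, ← hMset, hB]
  -- induction hypothesis for each block
  have hIH : ∀ A ∈ M, IsHierarchy A (g A) ∧ (g A).card ≤ 2 * A.card - 1 ∧
      ((g A).card = 2 * A.card - 1 →
        ∀ T' ∈ (T0 :: Ps).map (fun T => restrictT T A), T' = g A) := by
    intro A hA
    have hAs := fact_ssub A hA
    have hAX : A ⊆ X := subset_of_ssubset hAs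
    have hcard : A.card ≤ m := by
      have := Finset.card_lt_card hAs
      omega
    refine IH m (by omega) A _ (fact_ne A hA) hcard (by simp) ?_
    intro T' hT'
    obtain ⟨T, hT, rfl⟩ := List.mem_map.1 hT'
    exact restrict_hierarchy (hH T hT) hAX (fact_ne A hA)
  have htop : ∀ C ∈ M.biUnion g, C ⊆ X := by
    intro C hC
    obtain ⟨A, hA, hCA⟩ := Finset.mem_biUnion.1 hC
    exact le_trans ((hIH A hA).1.subset_top C hCA) (subset_of_ssubset (fact_ssub A hA))
  have hXnotin : X ∉ M.biUnion g := by
    intro hXmem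
    obtain ⟨A, hA, hXA⟩ := Finset.mem_biUnion.1 hXmem
    have h1 : X ⊆ A := (hIH A hA).1.subset_top X hXA
    exact (fact_ssub A hA).not_subset h1
  have hgdisj : ∀ A ∈ M, ∀ A' ∈ M, A ≠ A' → Disjoint (g A) (g A') := by
    intro A hA A' hA' hne
    rw [Finset.disjoint_left]
    intro C hC hC'
    have h1 : C ⊆ A := (hIH A hA).1.subset_top C hC
    have h2 : C ⊆ A' := (hIH A' hA').1.subset_top C hC'
    obtain ⟨x, hx⟩ := (hIH A hA).1.cluster_nonempty C hC
    have hx' : x ∈ A ∩ A' := Finset.mem_inter.2 ⟨h1 hx, h2 hx⟩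
    rw [fact_pd A hA A' hA' hne] at hx'
    simp at hx'
  have hcards : (insert X (M.biUnion g)).card = 1 + ∑ A ∈ M, (g A).card := by
    rw [Finset.card_insert_of_notMem hXnotin, Finset.card_biUnion hgdisj]
    omega
  have hXeq : X = M.biUnion id := by
    ext x
    simp only [Finset.mem_biUnion, id]
    constructor
    · intro hx; exact fact_cover x hx
    · rintro ⟨A, hA, hx⟩; exact (subset_of_ssubset (fact_ssub A hA)) hx
  have hsum : ∑ A ∈ M, A.card = X.card := by
    have hd : ∀ A ∈ M, ∀ A' ∈ M, A ≠ A' → Disjoint (id A) (id A') := fun A hA A' hA' hne =>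
      Finset.disjoint_iff_inter_eq_empty.2 (fact_pd A hA A' hA' hne)
    rw [hXeq, Finset.card_biUnion hd]
    simp
  have hk2 : 2 ≤ M.card := by
    by_contra h
    push_neg at h
    interval_cases hMc : M.card
    · rw [Finset.card_eq_zero.1 hMc] at hXeq
      simp at hXeq
      exact absurd hXeq (Finset.nonempty_iff_ne_empty.1 hXne)
    · obtain ⟨A, hA⟩ := Finset.card_eq_one.1 hMc
      rw [hA] at hXeq
      simp at hXeq
      have := fact_ssub A (by rw [hA]; simp)
      rw [hXeq] at this
      exact (lt_irrefl _ this)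
  have hble : ∀ A ∈ M, (g A).card ≤ 2 * A.card - 1 := fun A hA => (hIH A hA).2.1
  have hA1card : ∀ A ∈ M, 1 ≤ A.card := fun A hA => (fact_ne A hA).card_pos
  have hsum2 : ∑ A ∈ M, (2 * A.card - 1) + M.card = 2 * X.card := by
    have h1 : ∑ A ∈ M, (2 * A.card - 1) + M.card = ∑ A ∈ M, (2 * A.card - 1 + 1) := by
      rw [Finset.sum_add_distrib]
      simp
    rw [h1]
    have h2 : ∑ A ∈ M, (2 * A.card - 1 + 1) = ∑ A ∈ M, 2 * A.card :=
      Finset.sum_congr rfl (fun A hA => by have := hA1card A hA; omega)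
    rw [h2, ← Finset.mul_sum, hsum]
  have hSle : ∑ A ∈ M, (g A).card ≤ ∑ A ∈ M, (2 * A.card - 1) := Finset.sum_le_sum hble
  refine ⟨?_, ?_, ?_⟩
  · -- (a) hierarchy
    rw [hAD]
    constructor
    · intro C hC
      rcases Finset.mem_insert.1 hC with rfl | hC
      · exact subset_rfl
      · exact htop C hC
    · intro C hC
      rcases Finset.mem_insert.1 hC with rfl | hC
      · exact hXne
      · obtain ⟨A, hA, hCA⟩ := Finset.mem_biUnion.1 hC
        exact (hIH A hA).1.cluster_nonempty C hCA
    · exact Finset.mem_insert_self _ _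
    · intro x hx
      obtain ⟨A, hA, hxA⟩ := fact_cover x hx
      exact Finset.mem_insert.2 (Or.inr
        (Finset.mem_biUnion.2 ⟨A, hA, (hIH A hA).1.singleton_mem x hxA⟩))
    · intro C hC D hD
      rcases Finset.mem_insert.1 hC with rfl | hC
      · rcases Finset.mem_insert.1 hD with rfl | hD
        · right; left; exact subset_rfl
        · right; right; exact htop D hD
      rcases Finset.mem_insert.1 hD with rfl | hD
      · right; left; exact htop C hC
      obtain ⟨A, hA, hCA⟩ := Finset.mem_biUnion.1 hC
      obtain ⟨A', hA', hDA⟩ := Finset.mem_biUnion.1 hD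
      by_cases hAA : A = A'
      · subst hAA
        exact (hIH A hA).1.laminar C hCA D hDA
      · left
        have h0 := fact_pd A hA A' hA' hAA
        have hsub : C ∩ D ⊆ A ∩ A' := Finset.inter_subset_inter
          ((hIH A hA).1.subset_top C hCA) ((hIH A' hA').1.subset_top D hDA)
        rw [h0] at hsub
        exact Finset.subset_empty.1 hsub
  · -- (b) cardinality bound
    rw [hAD, hcards]
    omega
  · -- (c) binary forces equality
    intro hbc T hT
    rw [hAD, hcards] at hbc
    have hk : M.card = 2 ∧ ∑ A ∈ M, (g A).card = ∑ A ∈ M, (2 * A.card - 1) := by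
      constructor <;> omega
    have hpoint : ∀ A ∈ M, (g A).card = 2 * A.card - 1 :=
      (Finset.sum_eq_sum_iff_of_le hble).1 hk.2
    obtain ⟨A1, A2, hA12ne, hMeq⟩ := Finset.card_eq_two.1 hk.1
    have hA1M : A1 ∈ M := by rw [hMeq]; simp
    have hA2M : A2 ∈ M := by rw [hMeq]; simp
    have hrest : ∀ A ∈ M, ∀ T' ∈ T0 :: Ps, restrictT T' A = g A := by
      intro A hA T' hT'
      exact (hIH A hA).2.2 (hpoint A hA) _ (List.mem_map_of_mem hT')
    have hTh := hH T hT
    have hdisj12 : A1 ∩ A2 = ∅ := fact_pd A1 hA1M A2 hA2M hA12ne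
    have hcov12 : ∀ x ∈ X, x ∈ A1 ∨ x ∈ A2 := by
      intro x hx
      obtain ⟨A, hA, hxA⟩ := fact_cover x hx
      rw [hMeq] at hA
      simp only [Finset.mem_insert, Finset.mem_singleton] at hA
      rcases hA with rfl | rfl
      · exact Or.inl hxA
      · exact Or.inr hxA
    have hsubC : ∀ C ∈ maxProper X T, C = A1 ∨ C = A2 := by
      intro C hC
      obtain ⟨hCT, hCne, _⟩ := mem_maxProper.1 hC
      have hCX : C ⊆ X := hTh.subset_top C hCT
      have key : ∀ A ∈ M, (C ∩ A).Nonempty → A ⊆ C := by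
        rintro A hA ⟨x, hx⟩
        obtain ⟨D, hD, hAD⟩ := fact_sub A hA T hT
        have hCD : C = D := by
          by_contra hne
          have h0 := maxProper_pd hTh C hC D hD hne
          have hx' : x ∈ C ∩ D := Finset.mem_inter.2
            ⟨(Finset.mem_inter.1 hx).1, hAD (Finset.mem_inter.1 hx).2⟩
          rw [h0] at hx'
          simp at hx'
        rw [hCD]; exact hAD
      by_cases h1 : (C ∩ A1).Nonempty
      · by_cases h2 : (C ∩ A2).Nonempty
        · exfalso
          have hXC : X ⊆ C := by
            intro x hx
            rcases hcov12 x hx with h | h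
            · exact key A1 hA1M h1 h
            · exact key A2 hA2M h2 h
          exact hCne (Finset.Subset.antisymm hCX hXC)
        · left
          refine Finset.Subset.antisymm ?_ (key A1 hA1M h1)
          intro x hx
          rcases hcov12 x (hCX hx) with h | h
          · exact h
          · exact absurd ⟨x, Finset.mem_inter.2 ⟨hx, h⟩⟩ h2
      · by_cases h2 : (C ∩ A2).Nonempty
        · right
          refine Finset.Subset.antisymm ?_ (key A2 hA2M h2)
          intro x hx
          rcases hcov12 x (hCX hx) with h | h
          · exact absurd ⟨x, Finset.mem_inter.2 ⟨hx, h⟩⟩ h1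
          · exact h
        · exfalso
          obtain ⟨x, hx⟩ := hTh.cluster_nonempty C hCT
          rcases hcov12 x (hCX hx) with h | h
          · exact h1 ⟨x, Finset.mem_inter.2 ⟨hx, h⟩⟩
          · exact h2 ⟨x, Finset.mem_inter.2 ⟨hx, h⟩⟩
    have hAmem : ∀ A ∈ M, A ∈ maxProper X T := by
      intro A hA
      obtain ⟨D, hD, hAD⟩ := fact_sub A hA T hT
      obtain ⟨x, hx⟩ := fact_ne A hA
      have hDA : D = A := by
        rw [hMeq] at hA
        simp only [Finset.mem_insert, Finset.mem_singleton] at hA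
        rcases hA with h | h <;> rcases hsubC D hD with h' | h'
        · rw [h, h']
        · exfalso
          have hxx : x ∈ A1 ∩ A2 := Finset.mem_inter.2 ⟨h ▸ hx, h' ▸ hAD hx⟩
          rw [hdisj12] at hxx; simp at hxx
        · exfalso
          have hxx : x ∈ A1 ∩ A2 := Finset.mem_inter.2 ⟨h' ▸ hAD hx, h ▸ hx⟩
          rw [hdisj12] at hxx; simp at hxx
        · rw [h, h']
      rw [← hDA]; exact hD
    have hfilter : ∀ A ∈ M, restrictT T A = T.filter (fun C => C ⊆ A) := by
      intro A hA
      exact restrict_eq_filter hTh (mem_maxProper.1 (hAmem A hA)).1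
    have hTdecomp : T = insert X
        (T.filter (fun C => C ⊆ A1) ∪ T.filter (fun C => C ⊆ A2)) := by
      ext C
      simp only [Finset.mem_insert, Finset.mem_union, Finset.mem_filter]
      constructor
      · intro hC
        by_cases hCX : C = X
        · exact Or.inl hCX
        · right
          obtain ⟨D, hD, hCD⟩ := exists_maxProper hTh hC hCX
          rcases hsubC D hD with rfl | rfl
          · exact Or.inl ⟨hC, hCD⟩
          · exact Or.inr ⟨hC, hCD⟩
      · rintro (rfl | ⟨h, _⟩ | ⟨h, _⟩)
        · exact hTh.top_mem
        · exact h
        · exact h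
    rw [hAD, hMeq]
    have hbu : ({A1, A2} : Finset (Finset ℕ)).biUnion g = g A1 ∪ g A2 := by
      simp [Finset.biUnion_insert]
    rw [hbu, ← hrest A1 hA1M T hT, ← hrest A2 hA2M T hT,
      hfilter A1 hA1M, hfilter A2 hA2M]
    exact hTdecomp

/-- Binary converse of unanimity for Adams consensus: if the Adams consensus
tree of a profile is binary, then every tree of the profile equals it. -/
theorem adams_binary_converse_unanimity (X : Finset ℕ) (hX : X.Nonempty)
    (P : List PTree) (hP : P ≠ []) (hh : ∀ T ∈ P, IsHierarchy X T)
    (hbin : IsBinary X (adams X P)) :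
    ∀ T ∈ P, T = adams X P :=
  (main_lemma X.card X P hX le_rfl hP hh).2.2 hbin
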